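/- If G is a symmetric positive semidefinite block matrix G = [[G₂₂, G₂₁, G₂₀],[G₂₁ᵀ, G₁₁, G₁₀],[G₂₀ᵀ, G₁₀ᵀ, G₀₀]] and the even quartic polynomial g(u) = ūᵀ G ū (with ū = (v(u), u, 1)) satisfies the vanishing of odd-order parts, then the reduced matrix G̃ = [[G₂₂, G₂₀ + svec(G₁₁)/2],[(G₂₀ + svec(G₁₁)/2)ᵀ, G₀₀]] satisfies g(u) = ũᵀ G̃ ũ for ũ = (v(u), 1), and G̃ can be chosen so that ũᵀ G̃ ũ ≥ 0 for all u. -/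

import Mathlib

/-!
Expanding the quadratic form blockwise,
`g(u) = vᵀG₂₂v + 2vᵀG₂₁u + 2vᵀG₂₀ + uᵀG₁₁u + 2uᵀG₁₀ + G₀₀` with `v = v(u)`.
The odd-order hypothesis kills the terms cubic and linear in `u`, and the remaining quadratic
term is linear in the monomials: `uᵀG₁₁u = vᵀ svec(G₁₁)`. Absorbing it into the cross term
`2vᵀG₂₀` gives `ũᵀG̃ũ`, which is therefore nonnegative because `ūᵀGū` is.
-/

open Matrix

abbrev Qidx (n : ℕ) := {p : Fin n × Fin n // p.1 ≤ p.2}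

abbrev Idx (n : ℕ) := Qidx n ⊕ (Fin n ⊕ Unit)

def qvec {n : ℕ} (u : Fin n → ℝ) : Qidx n → ℝ := fun p => u p.1.1 * u p.1.2

def ubar {n : ℕ} (u : Fin n → ℝ) : Idx n → ℝ :=
  Sum.elim (qvec u) (Sum.elim u (fun _ => 1))

def utilde {n : ℕ} (u : Fin n → ℝ) : (Qidx n ⊕ Unit) → ℝ :=
  Sum.elim (qvec u) (fun _ => 1)

/-- svec with off-diagonal weight 2, so that qvec(u) ⬝ svec(M) = uᵀ M u. -/
def svec {n : ℕ} (M : Matrix (Fin n) (Fin n) ℝ) : Qidx n → ℝ :=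
  fun p => if p.1.1 = p.1.2 then M p.1.1 p.1.2 else 2 * M p.1.1 p.1.2

theorem Fintype.sum_subtype_le_eq_sum_of_swap {ι M : Type*} [Fintype ι] [LinearOrder ι]
    [AddCommMonoid M] (f : ι × ι → M) (hf : ∀ p, f p.swap = f p) :
    ∑ p : {p : ι × ι // p.1 ≤ p.2}, (if p.1.1 = p.1.2 then f p else 2 • f p) = ∑ p, f p := by
  have hswap : ∑ p : ι × ι, (if p.2 < p.1 then f p else 0) =
      ∑ p : ι × ι, (if p.1 < p.2 then f p else 0) :=
    Fintype.sum_equiv (Equiv.prodComm ι ι) _ _ fun p => by simp [hf]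
  have htrich : ∀ p : ι × ι, f p =
      (if p.1 < p.2 then f p else 0) + (if p.1 = p.2 then f p else 0) +
        (if p.2 < p.1 then f p else 0) := fun p => by
    rcases lt_trichotomy p.1 p.2 with h | h | h
    · simp [h, lt_asymm h, h.ne]
    · simp [h]
    · simp [h, lt_asymm h, h.ne']
  rw [← Finset.sum_subtype (Finset.univ.filter fun p : ι × ι => p.1 ≤ p.2) (by simp)
      (fun p => if p.1 = p.2 then f p else 2 • f p), Finset.sum_filter,
    Finset.sum_congr rfl fun p _ => htrich p, Finset.sum_add_distrib, hswap,
    ← Finset.sum_add_distrib]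
  refine Finset.sum_congr rfl fun p _ => ?_
  rcases lt_trichotomy p.1 p.2 with h | h | h
  · simp [h, h.le, h.ne, two_nsmul]
  · simp [h]
  · simp [lt_asymm h, h.not_ge, h.ne']

namespace Matrix

variable {l m n R : Type*} [Fintype m] [Fintype n] [CommSemiring R]

theorem sumElim_dotProduct_mulVec_sumElim (A : Matrix (m ⊕ n) (m ⊕ n) R) (x : m → R)
    (y : n → R) :
    Sum.elim x y ⬝ᵥ A *ᵥ Sum.elim x y =
      x ⬝ᵥ A.toBlocks₁₁ *ᵥ x + x ⬝ᵥ A.toBlocks₁₂ *ᵥ y + y ⬝ᵥ A.toBlocks₂₁ *ᵥ x +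
        y ⬝ᵥ A.toBlocks₂₂ *ᵥ y := by
  conv_lhs => rw [← A.fromBlocks_toBlocks]
  simp only [fromBlocks_mulVec, sumElim_dotProduct_sumElim, Sum.elim_comp_inl,
    Sum.elim_comp_inr, dotProduct_add]
  abel

theorem IsSymm.sumElim_dotProduct_mulVec_sumElim {A : Matrix (m ⊕ n) (m ⊕ n) R}
    (hA : A.IsSymm) (x : m → R) (y : n → R) :
    Sum.elim x y ⬝ᵥ A *ᵥ Sum.elim x y =
      x ⬝ᵥ A.toBlocks₁₁ *ᵥ x + 2 * (x ⬝ᵥ A.toBlocks₁₂ *ᵥ y) + y ⬝ᵥ A.toBlocks₂₂ *ᵥ y := by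
  have hcross : y ⬝ᵥ A.toBlocks₂₁ *ᵥ x = x ⬝ᵥ A.toBlocks₁₂ *ᵥ y := by
    rw [dotProduct_comm, dotProduct_mulVec, ← mulVec_transpose]
    congr 2
    ext i j
    exact hA.apply (Sum.inl j) (Sum.inr i)
  rw [A.sumElim_dotProduct_mulVec_sumElim, hcross]
  ring

theorem mulVec_sumElim_one (A : Matrix l (m ⊕ Unit) R) (x : m → R) :
    A *ᵥ Sum.elim x (fun _ => 1) = A.toCols₁ *ᵥ x + fun i => A i (.inr ()) := by
  ext i
  simp [mulVec, dotProduct, toCols₁]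

theorem sumElim_one_dotProduct_mulVec_sumElim_one (A : Matrix (m ⊕ Unit) (m ⊕ Unit) R)
    (x : m → R) :
    Sum.elim x (fun _ => 1) ⬝ᵥ A *ᵥ Sum.elim x (fun _ => 1) =
      x ⬝ᵥ A.toBlocks₁₁ *ᵥ x + x ⬝ᵥ (fun i => A (.inl i) (.inr ())) +
        (fun j => A (.inr ()) (.inl j)) ⬝ᵥ x + A (.inr ()) (.inr ()) := by
  rw [sumElim_dotProduct_mulVec_sumElim]
  simp [dotProduct, mulVec, toBlocks₁₂, toBlocks₂₁, toBlocks₂₂]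

theorem IsSymm.sumElim_one_dotProduct_mulVec_sumElim_one {A : Matrix (m ⊕ Unit) (m ⊕ Unit) R}
    (hA : A.IsSymm) (x : m → R) :
    Sum.elim x (fun _ => 1) ⬝ᵥ A *ᵥ Sum.elim x (fun _ => 1) =
      x ⬝ᵥ A.toBlocks₁₁ *ᵥ x + 2 * (x ⬝ᵥ fun i => A (.inl i) (.inr ())) +
        A (.inr ()) (.inr ()) := by
  have hrow : (fun j => A (.inr ()) (.inl j)) = fun j => A (.inl j) (.inr ()) :=
    funext fun j => hA.apply (.inl j) (.inr ())
  rw [A.sumElim_one_dotProduct_mulVec_sumElim_one, hrow, dotProduct_comm _ x]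
  ring

end Matrix

theorem qvec_dotProduct_svec {n : ℕ} (u : Fin n → ℝ) {M : Matrix (Fin n) (Fin n) ℝ}
    (hM : M.IsSymm) : qvec u ⬝ᵥ svec M = u ⬝ᵥ M *ᵥ u := by
  have hpairs : u ⬝ᵥ M *ᵥ u = ∑ p : Fin n × Fin n, u p.1 * M p.1 p.2 * u p.2 := by
    simp only [dotProduct, mulVec, Fintype.sum_prod_type, Finset.mul_sum, mul_assoc]
  rw [hpairs, ← Fintype.sum_subtype_le_eq_sum_of_swap _ fun p => by
    simp only [Prod.fst_swap, Prod.snd_swap, hM.apply p.1 p.2]; ring]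
  refine Finset.sum_congr rfl fun p _ => ?_
  simp only [qvec, svec]
  split_ifs
  · ring
  · rw [two_nsmul]; ring

theorem ubar_dotProduct_mulVec_ubar {n : ℕ} {G : Matrix (Idx n) (Idx n) ℝ} (hG : G.IsSymm)
    (u : Fin n → ℝ) :
    ubar u ⬝ᵥ G *ᵥ ubar u =
      qvec u ⬝ᵥ (of fun p q => G (.inl p) (.inl q)) *ᵥ qvec u
        + 2 * (qvec u ⬝ᵥ (of fun p i => G (.inl p) (.inr (.inl i))) *ᵥ u)
        + 2 * (qvec u ⬝ᵥ fun p => G (.inl p) (.inr (.inr ())))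
        + u ⬝ᵥ (of fun i j => G (.inr (.inl i)) (.inr (.inl j))) *ᵥ u
        + 2 * (u ⬝ᵥ fun i => G (.inr (.inl i)) (.inr (.inr ())))
        + G (.inr (.inr ())) (.inr (.inr ())) := by
  have h22 : G.toBlocks₂₂.IsSymm := hG.submatrix Sum.inr
  rw [ubar, hG.sumElim_dotProduct_mulVec_sumElim, h22.sumElim_one_dotProduct_mulVec_sumElim_one,
    mulVec_sumElim_one, dotProduct_add]
  simp only [toBlocks₁₁, toBlocks₁₂, toBlocks₂₂, toCols₁, of_apply]
  ring

theorem stmt10 (n : ℕ)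
    (G : Matrix (Idx n) (Idx n) ℝ) (hG : G.PosSemidef)
    -- vanishing of the odd-order parts of g(u) = ūᵀ G ū
    (hodd : ∀ u : Fin n → ℝ,
      qvec u ⬝ᵥ (Matrix.of fun (p : Qidx n) (i : Fin n) =>
          G (Sum.inl p) (Sum.inr (Sum.inl i))).mulVec u = 0 ∧
      u ⬝ᵥ (fun i : Fin n => G (Sum.inr (Sum.inl i)) (Sum.inr (Sum.inr ()))) = 0)
    (G20t : Qidx n → ℝ)
    (hG20t : G20t = fun p => G (Sum.inl p) (Sum.inr (Sum.inr ())) +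
        svec (Matrix.of fun i j : Fin n =>
          G (Sum.inr (Sum.inl i)) (Sum.inr (Sum.inl j))) p / 2)
    (Gt : Matrix (Qidx n ⊕ Unit) (Qidx n ⊕ Unit) ℝ)
    (hGt : Gt = fun a b =>
      match a, b with
      | Sum.inl p, Sum.inl q => G (Sum.inl p) (Sum.inl q)
      | Sum.inl p, Sum.inr _ => G20t p
      | Sum.inr _, Sum.inl q => G20t q
      | Sum.inr _, Sum.inr _ => G (Sum.inr (Sum.inr ())) (Sum.inr (Sum.inr ()))) :
    ∀ u : Fin n → ℝ,
      ubar u ⬝ᵥ G.mulVec (ubar u) = utilde u ⬝ᵥ Gt.mulVec (utilde u) ∧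
      0 ≤ utilde u ⬝ᵥ Gt.mulVec (utilde u) := by
  have hsymm : G.IsSymm := isHermitian_iff_isSymm.mp hG.isHermitian
  intro u
  have hG11 := qvec_dotProduct_svec u
    (M := of fun i j => G (.inr (.inl i)) (.inr (.inl j))) (hsymm.submatrix _)
  have hG20t' : G20t = (fun p => G (.inl p) (.inr (.inr ()))) +
      (2⁻¹ : ℝ) • svec (of fun i j => G (.inr (.inl i)) (.inr (.inl j))) := by
    rw [hG20t]; ext p; simp only [Pi.add_apply, Pi.smul_apply, smul_eq_mul]; ring
  have hreduced : utilde u ⬝ᵥ Gt *ᵥ utilde u =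
      qvec u ⬝ᵥ (of fun p q => G (.inl p) (.inl q)) *ᵥ qvec u + 2 * (qvec u ⬝ᵥ G20t) +
        G (.inr (.inr ())) (.inr (.inr ())) := by
    have hGt₁₁ : Gt.toBlocks₁₁ = of fun p q => G (.inl p) (.inl q) := by subst hGt; rfl
    rw [utilde, sumElim_one_dotProduct_mulVec_sumElim_one, hGt₁₁, hGt, dotProduct_comm _ (qvec u)]
    ring
  have hform : ubar u ⬝ᵥ G *ᵥ ubar u = utilde u ⬝ᵥ Gt *ᵥ utilde u := by
    rw [ubar_dotProduct_mulVec_ubar hsymm, (hodd u).1, (hodd u).2, hreduced, ← hG11, hG20t',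
      dotProduct_add, dotProduct_smul, smul_eq_mul]
    ring
  exact ⟨hform, hform ▸ hG.dotProduct_mulVec_nonneg (ubar u)⟩
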